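/- arXiv:2104.10952 — 3 statements merged into one kernel-verified Lean document; each statement's English description precedes it below -/
import Mathlib

section
/- Suppose D' ⊆ (F' × Fe) × (E' × Ee) and D'' ⊆ (F'' × Fe) × (E'' × Ee) are Dirac structures (finite-dimensional). Then the composition D' ⊓ D'' := {(f',f'',e',e'') : ∃ (f^e, e^e) with (f', f^e, e', e^e) ∈ D' and (f'', -f^e, e'', e^e) ∈ D''} is contained in its orthogonal (D' ⊓ D'')^⊥ with respect to the bilinear pairing ⟪(f'_1,f''_1,e'_1,e''_1),(f'_2,f''_2,e'_2,e''_2)⟫ = ⟨e'_1|f'_2⟩ + ⟨e'_2|f'_1⟩ + ⟨e''_1|f''_2⟩ + ⟨e''_2|f''_1⟩. -/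
/-!
For two elements of the composition, pair their lifts in `D'` and in `D''`: both pairings
vanish, and in their sum the contributions of the interconnection port cancel, because the flows
on that port enter `D''` with the opposite sign while the efforts are shared. What remains is the
pairing of the two elements on `F' × F''`.
-/

open RealInnerProductSpace

section Composition

variable {F' F'' Fe : Type*}
  [NormedAddCommGroup F'] [InnerProductSpace ℝ F']
  [NormedAddCommGroup F''] [InnerProductSpace ℝ F'']
  [NormedAddCommGroup Fe] [InnerProductSpace ℝ Fe]

theorem Set.forall_mem_of_eq_setOf_forall_mem {α : Type*} {D : Set α} {P : α → α → Prop}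
    (hD : D = {d' | ∀ d ∈ D, P d d'}) : ∀ d' ∈ D, ∀ d ∈ D, P d d' := fun d' hd' => by
  rw [hD] at hd'
  exact hd'

theorem composition_isotropic
    {D' : Set ((F' × Fe) × (F' × Fe))} {D'' : Set ((F'' × Fe) × (F'' × Fe))}
    (hD' : ∀ d' ∈ D', ∀ d ∈ D',
      (⟪d.2.1, d'.1.1⟫ + ⟪d.2.2, d'.1.2⟫) + (⟪d'.2.1, d.1.1⟫ + ⟪d'.2.2, d.1.2⟫) = 0)
    (hD'' : ∀ d' ∈ D'', ∀ d ∈ D'',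
      (⟪d.2.1, d'.1.1⟫ + ⟪d.2.2, d'.1.2⟫) + (⟪d'.2.1, d.1.1⟫ + ⟪d'.2.2, d.1.2⟫) = 0)
    {f₁' f₂' e₁' e₂' : F'} {f₁'' f₂'' e₁'' e₂'' : F''} {fe₁ fe₂ ee₁ ee₂ : Fe}
    (h₁' : ((f₁', fe₁), (e₁', ee₁)) ∈ D') (h₁'' : ((f₁'', -fe₁), (e₁'', ee₁)) ∈ D'')
    (h₂' : ((f₂', fe₂), (e₂', ee₂)) ∈ D') (h₂'' : ((f₂'', -fe₂), (e₂'', ee₂)) ∈ D'') :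
    (⟪e₂', f₁'⟫ + ⟪e₁', f₂'⟫) + (⟪e₂'', f₁''⟫ + ⟪e₁'', f₂''⟫) = 0 := by
  have hF' := hD' _ h₁' _ h₂'
  have hF'' := hD'' _ h₁'' _ h₂''
  simp only [inner_neg_right] at hF' hF''
  linarith

end Composition

theorem stmt5_general {F' F'' Fe : Type*}
    [NormedAddCommGroup F'] [InnerProductSpace ℝ F']
    [NormedAddCommGroup F''] [InnerProductSpace ℝ F'']
    [NormedAddCommGroup Fe] [InnerProductSpace ℝ Fe]
    (D' : Set ((F' × Fe) × (F' × Fe)))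
    (D'' : Set ((F'' × Fe) × (F'' × Fe)))
    (hD' : D' = {d' | ∀ d ∈ D',
      (⟪d.2.1, d'.1.1⟫ + ⟪d.2.2, d'.1.2⟫) + (⟪d'.2.1, d.1.1⟫ + ⟪d'.2.2, d.1.2⟫) = 0})
    (hD'' : D'' = {d' | ∀ d ∈ D'',
      (⟪d.2.1, d'.1.1⟫ + ⟪d.2.2, d'.1.2⟫) + (⟪d'.2.1, d.1.1⟫ + ⟪d'.2.2, d.1.2⟫) = 0})
    (comp : Set ((F' × F'') × (F' × F'')))
    (hcomp : comp = {d | ∃ (fe : Fe) (ee : Fe),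
      ((d.1.1, fe), (d.2.1, ee)) ∈ D' ∧ ((d.1.2, -fe), (d.2.2, ee)) ∈ D''}) :
    comp ⊆ {d' | ∀ d ∈ comp,
      (⟪d.2.1, d'.1.1⟫ + ⟪d'.2.1, d.1.1⟫) + (⟪d.2.2, d'.1.2⟫ + ⟪d'.2.2, d.1.2⟫) = 0} := by
  intro x hx y hy
  rw [hcomp] at hx hy
  obtain ⟨fex, eex, hx', hx''⟩ := hx
  obtain ⟨fey, eey, hy', hy''⟩ := hy
  exact composition_isotropic (Set.forall_mem_of_eq_setOf_forall_mem hD')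
    (Set.forall_mem_of_eq_setOf_forall_mem hD'') hx' hx'' hy' hy''

/-- the composition of two Dirac structures is contained in its
orthogonal with respect to the symmetrized pairing on (F'×F''), efforts identified
with flows via the inner product. -/
theorem stmt5 {F' F'' Fe : Type*}
    [NormedAddCommGroup F'] [InnerProductSpace ℝ F'] [FiniteDimensional ℝ F']
    [NormedAddCommGroup F''] [InnerProductSpace ℝ F''] [FiniteDimensional ℝ F'']
    [NormedAddCommGroup Fe] [InnerProductSpace ℝ Fe] [FiniteDimensional ℝ Fe]
    (D' : Set ((F' × Fe) × (F' × Fe)))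
    (D'' : Set ((F'' × Fe) × (F'' × Fe)))
    (hD' : D' = {d' | ∀ d ∈ D',
      (⟪d.2.1, d'.1.1⟫ + ⟪d.2.2, d'.1.2⟫) + (⟪d'.2.1, d.1.1⟫ + ⟪d'.2.2, d.1.2⟫) = 0})
    (hD'' : D'' = {d' | ∀ d ∈ D'',
      (⟪d.2.1, d'.1.1⟫ + ⟪d.2.2, d'.1.2⟫) + (⟪d'.2.1, d.1.1⟫ + ⟪d'.2.2, d.1.2⟫) = 0})
    (comp : Set ((F' × F'') × (F' × F'')))
    (hcomp : comp = {d | ∃ (fe : Fe) (ee : Fe),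
      ((d.1.1, fe), (d.2.1, ee)) ∈ D' ∧ ((d.1.2, -fe), (d.2.2, ee)) ∈ D''}) :
    comp ⊆ {d' | ∀ d ∈ comp,
      (⟪d.2.1, d'.1.1⟫ + ⟪d'.2.1, d.1.1⟫) + (⟪d.2.2, d'.1.2⟫ + ⟪d'.2.2, d.1.2⟫) = 0} :=
  stmt5_general D' D'' hD' hD'' comp hcomp
end

section
/- Let a < b, m = (a+b)/2. Define M_5 ∈ ℝ^{2×3} by M_5[1,l] = ∫_a^m ω_l^q(z) ω_am^q(z) dz + ∫_m^b ω_l^q(z) ω_am^q(z) dz (i.e., integral over [a,b]) and M_5[2,l] = ∫_a^b ω_l^q(z) ω_mb^q(z) dz, where ω_a^q(z)=(b-z)/(b-a), ω_b^q(z)=(z-a)/(b-a), ω_m^q is the hat function, ω_am^q(z) = (-4z+a+3b)/(a-b)^2, ω_mb^q(z) = (4z-3a-b)/(a-b)^2. Then the matrix identity M_4^⊤ M_2 + M_3^⊤ M_5 = diag(-1, 0, 1) holds, where M_2, M_3, M_4 are the boundary-evaluation and overlap matrices built from the same shape functions (M_3 uses boundary evaluations of ω_l^p). -/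
/-!
Entry `(k, l)` of `M₄ᵀ M₂ + M₃ᵀ M₅` pairs `ω_k^p` with the cell increments of `ω_l^q`, and the
cell increments of `ω_k^p` with `ω_l^q`. On each cell `ω_l^q` is affine, so the normalised
densities `ω_am^p, ω_mb^p` turn the first sum into `∫ ω_k^p (ω_l^q)'`; and `ω_k^p` is quadratic,
so `∑ᵢ (ω_k^p(∂Zᵢ)) ω_i^q = (ω_k^p)'` and the second sum is `∫ (ω_k^p)' ω_l^q`. The entry is
therefore `[ω_k^p ω_l^q]ₐᵇ`, and the nodal values of the shape functions at `a` and `b` leave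
`diag(-1, 0, 1)`.
-/

open Matrix Set intervalIntegral

theorem integral_mul_ite_mem_Icc {f : ℝ → ℝ} {a b c d k : ℝ} (hac : a ≤ c) (hcd : c ≤ d)
    (hdb : d ≤ b) :
    ∫ z in a..b, f z * (if z ∈ Icc c d then k else 0) = k * ∫ z in c..d, f z := by
  have hind : (fun z => f z * (if z ∈ Icc c d then k else 0)) =
      (Icc c d).indicator (fun z => k * f z) := by
    ext z
    by_cases hz : z ∈ Icc c d <;> simp [hz, mul_comm]
  rw [hind, integral_of_le (hac.trans (hcd.trans hdb)),
    ← MeasureTheory.integral_Icc_eq_integral_Ioc,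
    MeasureTheory.setIntegral_indicator measurableSet_Icc,
    inter_eq_right.2 (Icc_subset_Icc hac hdb), MeasureTheory.integral_Icc_eq_integral_Ioc,
    ← integral_of_le hcd, integral_const_mul]

theorem integration_by_parts_of_eqOn_affine {f g φ₁ φ₂ : ℝ → ℝ} {c d u v α β : ℝ}
    (hφ₁ : Continuous φ₁) (hφ₂ : Continuous φ₂)
    (hf : ∀ z, HasDerivAt f (u * φ₁ z + v * φ₂ z) z) (hcd : c ≤ d)
    (hg : EqOn g (fun z => α * z + β) (Icc c d)) :
    α * (∫ z in c..d, f z) + u * (∫ z in c..d, g z * φ₁ z) + v * ∫ z in c..d, g z * φ₂ z =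
      f d * g d - f c * g c := by
  have hfc : Continuous f := continuous_iff_continuousAt.2 fun z => (hf z).continuousAt
  have hg' : EqOn g (fun z => α * z + β) (uIcc c d) := by rwa [uIcc_of_le hcd]
  rw [integral_congr fun z hz => congrArg (· * φ₁ z) (hg' hz),
    integral_congr fun z hz => congrArg (· * φ₂ z) (hg' hz), hg ⟨le_rfl, hcd⟩,
    hg ⟨hcd, le_rfl⟩, ← integral_const_mul, ← integral_const_mul, ← integral_const_mul]
  beta_reduce
  have hint (h : ℝ → ℝ) (hh : Continuous h) : IntervalIntegrable h MeasureTheory.volume c d :=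
    hh.intervalIntegrable c d
  rw [← integral_add (hint _ (by fun_prop)) (hint _ (by fun_prop)),
    ← integral_add (hint _ (by fun_prop)) (hint _ (by fun_prop))]
  refine integral_eq_sub_of_hasDerivAt (f := fun z => f z * (α * z + β))
    (fun z _ => ?_) (hint _ (by fun_prop))
  exact ((hf z).mul (((hasDerivAt_id' z).const_mul α).add_const β)).congr_deriv (by ring)

theorem discrete_integration_by_parts {f g φ₁ φ₂ : ℝ → ℝ} {a m b c₁ c₂ α₁ β₁ α₂ β₂ : ℝ}
    (ham : a ≤ m) (hmb : m ≤ b) (hc₁ : c₁ * (m - a) = 1) (hc₂ : c₂ * (b - m) = 1)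
    (hφ₁ : Continuous φ₁) (hφ₂ : Continuous φ₂)
    (hf : ∀ z, HasDerivAt f ((f m - f a) * φ₁ z + (f b - f m) * φ₂ z) z)
    (hg₁ : EqOn g (fun z => α₁ * z + β₁) (Icc a m))
    (hg₂ : EqOn g (fun z => α₂ * z + β₂) (Icc m b)) :
    (∫ z in a..b, f z * (if z ∈ Icc a m then c₁ else 0)) * (g m - g a) +
        (∫ z in a..b, f z * (if z ∈ Icc m b then c₂ else 0)) * (g b - g m) +
      ((f m - f a) * (∫ z in a..b, g z * φ₁ z) + (f b - f m) * ∫ z in a..b, g z * φ₂ z) =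
      f b * g b - f a * g a := by
  have hint {c d α β : ℝ} {φ : ℝ → ℝ} (hφ : Continuous φ) (hcd : c ≤ d)
      (hg : EqOn g (fun z => α * z + β) (Icc c d)) :
      IntervalIntegrable (fun z => g z * φ z) MeasureTheory.volume c d := by
    refine ContinuousOn.intervalIntegrable (ContinuousOn.mul ?_ hφ.continuousOn)
    rw [uIcc_of_le hcd]
    exact (continuous_const.mul continuous_id |>.add continuous_const).continuousOn.congr hg
  have hs₁ : c₁ * (g m - g a) = α₁ := by
    rw [hg₁ ⟨ham, le_rfl⟩, hg₁ ⟨le_rfl, ham⟩]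
    linear_combination α₁ * hc₁
  have hs₂ : c₂ * (g b - g m) = α₂ := by
    rw [hg₂ ⟨hmb, le_rfl⟩, hg₂ ⟨le_rfl, hmb⟩]
    linear_combination α₂ * hc₂
  rw [integral_mul_ite_mem_Icc le_rfl ham hmb, integral_mul_ite_mem_Icc ham hmb le_rfl,
    ← integral_add_adjacent_intervals (hint hφ₁ ham hg₁) (hint hφ₁ hmb hg₂),
    ← integral_add_adjacent_intervals (hint hφ₂ ham hg₁) (hint hφ₂ hmb hg₂)]
  linear_combination integration_by_parts_of_eqOn_affine hφ₁ hφ₂ hf ham hg₁ +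
    integration_by_parts_of_eqOn_affine hφ₁ hφ₂ hf hmb hg₂ +
    (∫ z in a..m, f z) * hs₁ + (∫ z in m..b, f z) * hs₂

theorem hasDerivAt_quadratic_eq_increments {f φ₁ φ₂ : ℝ → ℝ} {a b m A B C : ℝ} (hab : a ≠ b)
    (hm : m = (a + b) / 2) (hf : ∀ z, f z = A * z ^ 2 + B * z + C)
    (hφ₁ : φ₁ = fun z => (-4 * z + a + 3 * b) / (a - b) ^ 2)
    (hφ₂ : φ₂ = fun z => (4 * z - 3 * a - b) / (a - b) ^ 2) (z : ℝ) :
    HasDerivAt f ((f m - f a) * φ₁ z + (f b - f m) * φ₂ z) z := by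
  have hf' : HasDerivAt f (2 * A * z + B) z := by
    rw [funext hf]
    exact (((hasDerivAt_pow 2 z).const_mul A).add ((hasDerivAt_id' z).const_mul B)).add_const C
      |>.congr_deriv (by ring)
  refine hf'.congr_deriv ?_
  have hab' : a - b ≠ 0 := sub_ne_zero.2 hab
  rw [hf, hf, hf, hφ₁, hφ₂, hm]
  field_simp
  ring

section ShapeFunctions

variable {a b m : ℝ}

theorem pShape_hasDerivAt {ωap ωmp ωbp ωamq ωmbq : ℝ → ℝ} (hab : a ≠ b) (hm : m = (a + b) / 2)
    (hωap : ωap = fun z => (z - b) ^ 2 / (a - b) ^ 2)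
    (hωbp : ωbp = fun z => (z - a) ^ 2 / (a - b) ^ 2)
    (hωmp : ωmp = fun z => (-4 * z ^ 2 + 4 * (a + b) * z - 4 * a * b) / (a - b) ^ 2)
    (hωamq : ωamq = fun z => (-4 * z + a + 3 * b) / (a - b) ^ 2)
    (hωmbq : ωmbq = fun z => (4 * z - 3 * a - b) / (a - b) ^ 2) :
    ∀ f ∈ ({ωap, ωmp, ωbp} : Set (ℝ → ℝ)),
      ∀ z, HasDerivAt f ((f m - f a) * ωamq z + (f b - f m) * ωmbq z) z := by
  rintro f (rfl | rfl | rfl)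
  · exact hasDerivAt_quadratic_eq_increments (A := 1 / (a - b) ^ 2)
      (B := -2 * b / (a - b) ^ 2) (C := b ^ 2 / (a - b) ^ 2) hab hm
      (fun z => by simp only [hωap]; ring) hωamq hωmbq
  · exact hasDerivAt_quadratic_eq_increments (A := -4 / (a - b) ^ 2)
      (B := 4 * (a + b) / (a - b) ^ 2) (C := -4 * a * b / (a - b) ^ 2) hab hm
      (fun z => by simp only [hωmp]; ring) hωamq hωmbq
  · exact hasDerivAt_quadratic_eq_increments (A := 1 / (a - b) ^ 2)
      (B := -2 * a / (a - b) ^ 2) (C := a ^ 2 / (a - b) ^ 2) hab hm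
      (fun z => by simp only [hωbp]; ring) hωamq hωmbq

theorem qShape_eqOn_affine {ωaq ωbq ωmq : ℝ → ℝ}
    (hωaq : ωaq = fun z => (b - z) / (b - a))
    (hωbq : ωbq = fun z => (z - a) / (b - a))
    (hωmq1 : ∀ z ∈ Icc a m, ωmq z = 2 * (z - a) / (b - a))
    (hωmq2 : ∀ z ∈ Icc m b, ωmq z = 2 * (b - z) / (b - a)) :
    ∀ g ∈ ({ωaq, ωmq, ωbq} : Set (ℝ → ℝ)), ∃ α₁ β₁ α₂ β₂ : ℝ,
      EqOn g (fun z => α₁ * z + β₁) (Icc a m) ∧ EqOn g (fun z => α₂ * z + β₂) (Icc m b) := by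
  rintro g (rfl | rfl | rfl)
  · exact ⟨-1 / (b - a), b / (b - a), -1 / (b - a), b / (b - a),
      fun z _ => by simp only [hωaq]; ring, fun z _ => by simp only [hωaq]; ring⟩
  · exact ⟨2 / (b - a), -2 * a / (b - a), -2 / (b - a), 2 * b / (b - a),
      fun z hz => by rw [hωmq1 z hz]; ring, fun z hz => by rw [hωmq2 z hz]; ring⟩
  · exact ⟨1 / (b - a), -a / (b - a), 1 / (b - a), -a / (b - a),
      fun z _ => by simp only [hωbq]; ring, fun z _ => by simp only [hωbq]; ring⟩

end ShapeFunctions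

/-- with the shape functions of Appendix A, the matrix identity
M_4ᵀ M_2 + M_3ᵀ M_5 = diag(-1, 0, 1) holds. -/
theorem stmt14 (a b : ℝ) (hab : a < b) (m : ℝ) (hm : m = (a + b) / 2)
    (ωaq ωbq ωmq ωap ωbp ωmp ωamq ωmbq ωamp ωmbp : ℝ → ℝ)
    (hωaq : ωaq = fun z => (b - z) / (b - a))
    (hωbq : ωbq = fun z => (z - a) / (b - a))
    (hωmq1 : ∀ z ∈ Set.Icc a m, ωmq z = 2 * (z - a) / (b - a))
    (hωmq2 : ∀ z ∈ Set.Icc m b, ωmq z = 2 * (b - z) / (b - a))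
    (hωap : ωap = fun z => (z - b) ^ 2 / (a - b) ^ 2)
    (hωbp : ωbp = fun z => (z - a) ^ 2 / (a - b) ^ 2)
    (hωmp : ωmp = fun z => (-4 * z ^ 2 + 4 * (a + b) * z - 4 * a * b) / (a - b) ^ 2)
    (hωamq : ωamq = fun z => (-4 * z + a + 3 * b) / (a - b) ^ 2)
    (hωmbq : ωmbq = fun z => (4 * z - 3 * a - b) / (a - b) ^ 2)
    (hωamp : ωamp = fun z => if z ∈ Set.Icc a m then 2 / (b - a) else 0)
    (hωmbp : ωmbp = fun z => if z ∈ Set.Icc m b then 2 / (b - a) else 0)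
    (M2 M3 M4 M5 : Matrix (Fin 2) (Fin 3) ℝ)
    (hM2 : M2 = Matrix.of
      ![![ωaq m - ωaq a, ωmq m - ωmq a, ωbq m - ωbq a],
        ![ωaq b - ωaq m, ωmq b - ωmq m, ωbq b - ωbq m]])
    (hM3 : M3 = Matrix.of
      ![![ωap m - ωap a, ωmp m - ωmp a, ωbp m - ωbp a],
        ![ωap b - ωap m, ωmp b - ωmp m, ωbp b - ωbp m]])
    (hM4 : M4 = Matrix.of
      ![![∫ z in a..b, ωap z * ωamp z, ∫ z in a..b, ωmp z * ωamp z,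
          ∫ z in a..b, ωbp z * ωamp z],
        ![∫ z in a..b, ωap z * ωmbp z, ∫ z in a..b, ωmp z * ωmbp z,
          ∫ z in a..b, ωbp z * ωmbp z]])
    (hM5 : M5 = Matrix.of
      ![![∫ z in a..b, ωaq z * ωamq z, ∫ z in a..b, ωmq z * ωamq z,
          ∫ z in a..b, ωbq z * ωamq z],
        ![∫ z in a..b, ωaq z * ωmbq z, ∫ z in a..b, ωmq z * ωmbq z,
          ∫ z in a..b, ωbq z * ωmbq z]]) :
    M4ᵀ * M2 + M3ᵀ * M5 = !![-1, 0, 0; 0, 0, 0; 0, 0, 1] := by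
  have hab' : a - b ≠ 0 := sub_ne_zero.2 hab.ne
  have hba : b - a ≠ 0 := sub_ne_zero.2 hab.ne'
  have ham : a ≤ m := by rw [hm]; linarith
  have hmb : m ≤ b := by rw [hm]; linarith
  have hc₁ : 2 / (b - a) * (m - a) = 1 := by rw [hm]; field_simp; ring
  have hc₂ : 2 / (b - a) * (b - m) = 1 := by rw [hm]; field_simp; ring
  have hφ₁ : Continuous ωamq := by rw [hωamq]; fun_prop
  have hφ₂ : Continuous ωmbq := by rw [hωmbq]; fun_prop
  have hentry : ∀ f ∈ ({ωap, ωmp, ωbp} : Set (ℝ → ℝ)), ∀ g ∈ ({ωaq, ωmq, ωbq} : Set (ℝ → ℝ)),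
      (∫ z in a..b, f z * ωamp z) * (g m - g a) + (∫ z in a..b, f z * ωmbp z) * (g b - g m) +
        ((f m - f a) * (∫ z in a..b, g z * ωamq z) + (f b - f m) * ∫ z in a..b, g z * ωmbq z) =
      f b * g b - f a * g a := by
    intro f hf g hg
    obtain ⟨α₁, β₁, α₂, β₂, hg₁, hg₂⟩ := qShape_eqOn_affine hωaq hωbq hωmq1 hωmq2 g hg
    rw [hωamp, hωmbp]
    exact discrete_integration_by_parts ham hmb hc₁ hc₂ hφ₁ hφ₂
      (pShape_hasDerivAt hab.ne hm hωap hωbp hωmp hωamq hωmbq f hf) hg₁ hg₂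
  have hp : ωap a = 1 ∧ ωap b = 0 ∧ ωmp a = 0 ∧ ωmp b = 0 ∧ ωbp a = 0 ∧ ωbp b = 1 := by
    simp only [hωap, hωmp, hωbp]
    refine ⟨?_, ?_, ?_, ?_, ?_, ?_⟩ <;> field_simp <;> ring
  have hq : ωaq a = 1 ∧ ωaq b = 0 ∧ ωmq a = 0 ∧ ωmq b = 0 ∧ ωbq a = 0 ∧ ωbq b = 1 := by
    rw [hωmq1 a ⟨le_rfl, ham⟩, hωmq2 b ⟨hmb, le_rfl⟩]
    simp only [hωaq, hωbq]
    refine ⟨?_, ?_, ?_, ?_, ?_, ?_⟩ <;> field_simp <;> ring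
  rw [hM2, hM3, hM4, hM5]
  ext k l
  fin_cases k <;> fin_cases l <;>
    simp only [Matrix.add_apply, Matrix.mul_apply, Fin.sum_univ_two, transpose_apply, of_apply,
      cons_val, Fin.reduceFinMk] <;>
    rw [hentry] <;> simp [hp, hq]
end

section
/- Let H : ℝ^n → ℝ be C¹ and let R := [[-A-A^⊤, C^⊤-B],[C-B^⊤, D+D^⊤]] ⪰ 0 (positive semidefinite). For any C¹ trajectory (u, x, y) of ẋ = A∇H(x) + Bu, y = C∇H(x) + Du, the dissipation inequality d/dt H(x(t)) ≤ y(t)^⊤ u(t) holds for all t ≥ 0. -/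
/-!
Along the trajectory, `d/dt H(x) = ∇H ⬝ ẋ = ∇H ⬝ (A ∇H + B u)` by the chain rule. Evaluating the
quadratic form of `R` at `(∇H(x), u)` gives `2 (y ⬝ u - ∇H ⬝ (A ∇H + B u)) ≥ 0`.
-/

open Matrix

theorem LinearMap.apply_eq_dotProduct {ι R : Type*} [Fintype ι] [DecidableEq ι] [CommSemiring R]
    (f : (ι → R) →ₗ[R] R) (v : ι → R) : f v = (fun i => f (Pi.single i 1)) ⬝ᵥ v := by
  conv_lhs => rw [← Finset.univ_sum_single v]
  refine (map_sum f _ _).trans (Finset.sum_congr rfl fun i _ => ?_)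
  have hsingle : Pi.single i (v i) = v i • Pi.single i (1 : R) := by
    rw [← Pi.single_smul', smul_eq_mul, mul_one]
  rw [hsingle, map_smul, smul_eq_mul, mul_comm]

theorem dotProduct_mulVec_add_le_of_posSemidef_fromBlocks {m n R : Type*} [Fintype m] [Fintype n]
    [CommRing R] [LinearOrder R] [IsStrictOrderedRing R] [StarRing R] [TrivialStar R]
    {A : Matrix n n R} {B : Matrix n m R} {C : Matrix m n R} {D : Matrix m m R}
    (hR : (fromBlocks (-A - Aᵀ) (Cᵀ - B) (C - Bᵀ) (D + Dᵀ)).PosSemidef) (e : n → R) (w : m → R) :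
    e ⬝ᵥ (A *ᵥ e + B *ᵥ w) ≤ (C *ᵥ e + D *ᵥ w) ⬝ᵥ w := by
  have hq := hR.dotProduct_mulVec_nonneg (Sum.elim e w)
  simp only [fromBlocks_mulVec, star_trivial, sumElim_dotProduct_sumElim, sub_mulVec, add_mulVec,
    neg_mulVec, dotProduct_add, dotProduct_sub, dotProduct_neg, Sum.elim_comp_inl,
    Sum.elim_comp_inr, dotProduct_transpose_mulVec] at hq
  rw [dotProduct_comm _ w]
  simp only [dotProduct_add]
  linarith

theorem hasDerivAt_comp_of_gradient {n : ℕ} {H : (Fin n → ℝ) → ℝ}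
    {gradH : (Fin n → ℝ) → (Fin n → ℝ)} (hgrad : ∀ x i, gradH x i = fderiv ℝ H x (Pi.single i 1))
    {x : ℝ → (Fin n → ℝ)} {x' : Fin n → ℝ} {t : ℝ} (hH : DifferentiableAt ℝ H (x t))
    (hx : HasDerivAt x x' t) : HasDerivAt (fun τ => H (x τ)) (gradH (x t) ⬝ᵥ x') t := by
  have hdot : fderiv ℝ H (x t) x' = gradH (x t) ⬝ᵥ x' := by
    rw [← (fderiv ℝ H (x t)).coe_coe, LinearMap.apply_eq_dotProduct, funext (hgrad (x t))]
    rfl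
  exact hdot ▸ hH.hasFDerivAt.comp_hasDerivAt t hx

/-- if R = [[-A-Aᵀ, Cᵀ-B],[C-Bᵀ, D+Dᵀ]] ⪰ 0 then along any C¹
trajectory of ẋ = A∇H(x)+Bu, y = C∇H(x)+Du, the dissipation inequality
d/dt H(x(t)) ≤ y(t)ᵀ u(t) holds for all t ≥ 0. -/
theorem stmt18 {n mm : ℕ}
    (A : Matrix (Fin n) (Fin n) ℝ) (B : Matrix (Fin n) (Fin mm) ℝ)
    (C : Matrix (Fin mm) (Fin n) ℝ) (D : Matrix (Fin mm) (Fin mm) ℝ)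
    (hR : (Matrix.fromBlocks (-A - Aᵀ) (Cᵀ - B) (C - Bᵀ) (D + Dᵀ)).PosSemidef)
    (H : (Fin n → ℝ) → ℝ) (hH : ContDiff ℝ 1 H)
    (gradH : (Fin n → ℝ) → (Fin n → ℝ))
    (hgrad : ∀ x i, gradH x i = fderiv ℝ H x (Pi.single i 1))
    (x : ℝ → (Fin n → ℝ)) (u y : ℝ → (Fin mm → ℝ))
    (hx : ∀ t, 0 ≤ t → HasDerivAt x (A *ᵥ gradH (x t) + B *ᵥ u t) t)
    (hy : ∀ t, 0 ≤ t → y t = C *ᵥ gradH (x t) + D *ᵥ u t) :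
    ∀ t, 0 ≤ t → deriv (fun τ => H (x τ)) t ≤ y t ⬝ᵥ u t := by
  intro t ht
  rw [(hasDerivAt_comp_of_gradient hgrad (hH.differentiable one_ne_zero (x t)) (hx t ht)).deriv,
    hy t ht]
  exact dotProduct_mulVec_add_le_of_posSemidef_fromBlocks hR _ _
end
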